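/- Cleaning Lemma: Let 𝒞 be a stabilizer code with stabilizer group 𝒮 ⊆ 𝒫_n (abelian, -I ∉ 𝒮) and logical group 𝓛 the centralizer of 𝒮 in the Pauli group. For any subset U of qubits, either (a) there exists a logical operator L ∈ 𝓛 \ 𝒮 supported entirely in U, or (b) for every coset [L] ∈ 𝓛/𝒮 there is a representative L' ∈ [L] acting trivially on U. -/
import Mathlib

/-- A Pauli operator on `n` qubits, modulo phase, represented symplectically:
an X-part and a Z-part, each a vector in `F₂ⁿ`. -/
abbrev PauliVec (n : ℕ) := (Fin n → ZMod 2) × (Fin n → ZMod 2)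

/-- The standard symplectic form on `F₂^{2n}`: two Pauli operators commute
iff the form vanishes. -/
def sympForm {n : ℕ} (u v : PauliVec n) : ZMod 2 :=
  ∑ i : Fin n, (u.1 i * v.2 i + u.2 i * v.1 i)

/-- Support of a Pauli operator: the qubits on which it acts nontrivially. -/
def psupp {n : ℕ} (u : PauliVec n) : Finset (Fin n) :=
  Finset.univ.filter fun i => u.1 i ≠ 0 ∨ u.2 i ≠ 0

/-- Restriction of a Pauli operator to a subset `U` of qubits (identity elsewhere). -/
def prestrict {n : ℕ} (u : PauliVec n) (U : Finset (Fin n)) : PauliVec n :=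
  (fun i => if i ∈ U then u.1 i else 0, fun i => if i ∈ U then u.2 i else 0)

lemma sympForm_comm {n : ℕ} (u v : PauliVec n) : sympForm u v = sympForm v u := by
  unfold sympForm; apply Finset.sum_congr rfl; intro i _; ring

lemma sympForm_sub_left {n : ℕ} (u v w : PauliVec n) :
    sympForm (u - v) w = sympForm u w - sympForm v w := by
  unfold sympForm
  rw [← Finset.sum_sub_distrib]
  apply Finset.sum_congr rfl; intro i _
  simp only [Prod.fst_sub, Prod.snd_sub, Pi.sub_apply]; ring

lemma sympForm_prestrict_left {n : ℕ} (u v : PauliVec n) (U : Finset (Fin n)) :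
    sympForm (prestrict u U) v = sympForm u (prestrict v U) := by
  unfold sympForm prestrict
  apply Finset.sum_congr rfl; intro i _
  dsimp only
  split_ifs <;> ring

lemma psupp_prestrict_subset {n : ℕ} (u : PauliVec n) (U : Finset (Fin n)) :
    psupp (prestrict u U) ⊆ U := by
  intro i hi
  simp only [psupp, prestrict, Finset.mem_filter] at hi
  by_contra h
  simp [h] at hi

/-- Restriction to `U` as a linear map. -/
def prestrictL {n : ℕ} (U : Finset (Fin n)) : PauliVec n →ₗ[ZMod 2] PauliVec n where
  toFun v := prestrict v U
  map_add' u v := by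
    unfold prestrict
    ext j <;> simp only [Prod.fst_add, Prod.snd_add, Pi.add_apply] <;>
      split_ifs <;> simp
  map_smul' c v := by
    unfold prestrict
    ext j <;> simp only [Prod.smul_fst, Prod.smul_snd, Pi.smul_apply, RingHom.id_apply,
      smul_eq_mul] <;> split_ifs <;> simp

/-- Every linear functional is represented by the symplectic form. -/
lemma sympForm_surj {n : ℕ} (φ : Module.Dual (ZMod 2) (PauliVec n)) :
    ∃ w : PauliVec n, ∀ v, sympForm w v = φ v := by
  refine ⟨(fun i => φ (0, Pi.single i 1), fun i => φ (Pi.single i 1, 0)), fun v => ?_⟩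
  have hv : v = (∑ i : Fin n, ((Pi.single i (v.1 i) : Fin n → ZMod 2), 0))
      + (∑ i : Fin n, ((0 : Fin n → ZMod 2), Pi.single i (v.2 i))) := by
    ext j <;>
      simp [Prod.fst_sum, Prod.snd_sum, Finset.univ_sum_single]
  have h1 : ∀ i : Fin n, φ ((Pi.single i (v.1 i) : Fin n → ZMod 2), 0)
      = v.1 i * φ (Pi.single i 1, 0) := by
    intro i
    have : ((Pi.single i (v.1 i) : Fin n → ZMod 2), (0 : Fin n → ZMod 2))
        = v.1 i • ((Pi.single i 1 : Fin n → ZMod 2), (0 : Fin n → ZMod 2)) := by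
      ext j <;> simp only [Prod.smul_fst, Prod.smul_snd, Pi.smul_apply, smul_eq_mul,
        Pi.single_apply] <;> first | (split_ifs <;> simp) | simp
    rw [this, map_smul, smul_eq_mul]
  have h2 : ∀ i : Fin n, φ ((0 : Fin n → ZMod 2), (Pi.single i (v.2 i) : Fin n → ZMod 2))
      = v.2 i * φ (0, Pi.single i 1) := by
    intro i
    have : ((0 : Fin n → ZMod 2), (Pi.single i (v.2 i) : Fin n → ZMod 2))
        = v.2 i • ((0 : Fin n → ZMod 2), (Pi.single i 1 : Fin n → ZMod 2)) := by
      ext j <;> simp only [Prod.smul_fst, Prod.smul_snd, Pi.smul_apply, smul_eq_mul,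
        Pi.single_apply] <;> first | (split_ifs <;> simp) | simp
    rw [this, map_smul, smul_eq_mul]
  conv_rhs => rw [hv]
  rw [map_add, map_sum, map_sum]
  simp only [h1, h2]
  rw [← Finset.sum_add_distrib]
  unfold sympForm
  apply Finset.sum_congr rfl; intro i _
  dsimp only
  ring

lemma exists_dual_of_nmem {n : ℕ} (p : Submodule (ZMod 2) (PauliVec n))
    (x : PauliVec n) (hx : x ∉ p) :
    ∃ φ : Module.Dual (ZMod 2) (PauliVec n), (∀ y ∈ p, φ y = 0) ∧ φ x ≠ 0 := by
  have hq : p.mkQ x ≠ 0 := by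
    simpa [Submodule.Quotient.mk_eq_zero] using hx
  have hne : ¬ ∀ g : Module.Dual (ZMod 2) (PauliVec n ⧸ p), g (p.mkQ x) = 0 := by
    intro hall
    exact hq ((Module.forall_dual_apply_eq_zero_iff (ZMod 2) (p.mkQ x)).mp hall)
  push_neg at hne
  obtain ⟨g, hg⟩ := hne
  refine ⟨g.comp p.mkQ, fun y hy => ?_, hg⟩
  have hy0 : p.mkQ y = 0 := (Submodule.Quotient.mk_eq_zero p).mpr hy
  simp only [LinearMap.comp_apply]
  rw [hy0, map_zero]

/-- Cleaning Lemma: for a stabilizer code (isotropic subspace `S`, logical group the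
symplectic centralizer of `S`) and any subset `U` of qubits, either there is a
nontrivial logical operator supported entirely in `U`, or every coset of logicals
modulo stabilizers has a representative acting trivially on `U`. -/
theorem stmt10_cleaning_lemma {n : ℕ}
    (S : Submodule (ZMod 2) (PauliVec n))
    (hiso : ∀ s ∈ S, ∀ s' ∈ S, sympForm s s' = 0)
    (U : Finset (Fin n)) :
    (∃ L : PauliVec n, (∀ s ∈ S, sympForm L s = 0) ∧ L ∉ S ∧ psupp L ⊆ U) ∨
    (∀ L : PauliVec n, (∀ s ∈ S, sympForm L s = 0) →
      ∃ L' : PauliVec n, (∀ s ∈ S, sympForm L' s = 0) ∧ L - L' ∈ S ∧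
        psupp L' ∩ U = ∅) := by
  by_cases h : ∃ L : PauliVec n, (∀ s ∈ S, sympForm L s = 0) ∧ L ∉ S ∧ psupp L ⊆ U
  · exact Or.inl h
  push_neg at h
  have H : ∀ v : PauliVec n, (∀ s ∈ S, sympForm v s = 0) → psupp v ⊆ U → v ∈ S := by
    intro v hv hs
    by_contra hvS
    exact (h v hv hvS) hs
  right
  intro L hL
  have key : ∃ s ∈ S, prestrict s U = prestrict L U := by
    by_contra hk
    push_neg at hk
    have hnm : prestrict L U ∉ S.map (prestrictL U) := by
      intro hmem
      obtain ⟨s, hsS, hs⟩ := hmem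
      exact hk s hsS hs
    obtain ⟨φ, hφ0, hφx⟩ := exists_dual_of_nmem _ _ hnm
    obtain ⟨w, hw⟩ := sympForm_surj φ
    set w' : PauliVec n := prestrict w U with hw'
    have hw'S : w' ∈ S := by
      apply H
      · intro s hsS
        rw [hw', sympForm_prestrict_left, hw]
        exact hφ0 _ ⟨s, hsS, rfl⟩
      · exact psupp_prestrict_subset w U
    have : sympForm L w' = 0 := hL w' hw'S
    rw [sympForm_comm, hw', sympForm_prestrict_left, hw] at this
    exact hφx this
  obtain ⟨s, hsS, hsr⟩ := key
  refine ⟨L - s, ?_, ?_, ?_⟩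
  · intro s' hs'
    rw [sympForm_sub_left, hL s' hs', hiso s hsS s' hs', sub_zero]
  · simpa using hsS
  · rw [Finset.eq_empty_iff_forall_notMem]
    intro i hi
    rw [Finset.mem_inter] at hi
    obtain ⟨hi, hiU⟩ := hi
    simp only [psupp, Finset.mem_filter, Finset.mem_univ, true_and] at hi
    have h1 : (prestrict s U).1 i = (prestrict L U).1 i := by rw [hsr]
    have h2 : (prestrict s U).2 i = (prestrict L U).2 i := by rw [hsr]
    simp only [prestrict, if_pos hiU] at h1 h2
    rcases hi with hi | hi
    · exact hi (by simp [Prod.fst_sub, Pi.sub_apply, h1])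
    · exact hi (by simp [Prod.snd_sub, Pi.sub_apply, h2])
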